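/- arXiv:2012.00040 — 2 statements merged into one kernel-verified Lean document; each statement's English description precedes it below -/
import Mathlib

section
/- The bound 2·E_N^{A|B} ≤ I_{A,B} fails for general quantum states: there exists a pure state on two qubits whose logarithmic negativity (which equals the Rényi-1/2 entropy of the reduced state) exceeds half its mutual information (which equals the von Neumann entropy of the reduced state). -/
open Matrix BigOperators
open scoped Classical ComplexOrder

noncomputable section

/-- Single-qubit Pauli matrices. -/
def P_I : Matrix (Fin 2) (Fin 2) ℂ := 1
def P_X : Matrix (Fin 2) (Fin 2) ℂ := !![0, 1; 1, 0]
def P_Y : Matrix (Fin 2) (Fin 2) ℂ := !![0, -Complex.I; Complex.I, 0]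
def P_Z : Matrix (Fin 2) (Fin 2) ℂ := !![1, 0; 0, -1]

/-- Tensor (Kronecker) product of a family of single-qubit operators, acting on
`(ℂ²)^{⊗L}` realized as matrices indexed by `Fin L → Fin 2`. -/
def pauliKron {L : ℕ} (f : Fin L → Matrix (Fin 2) (Fin 2) ℂ) :
    Matrix (Fin L → Fin 2) (Fin L → Fin 2) ℂ :=
  Matrix.of fun x y => ∏ i, f i (x i) (y i)

/-- `g` is a product of Pauli operators, up to a phase in `{1,-1,i,-i}`. -/
def IsPauliProduct {L : ℕ} (g : Matrix (Fin L → Fin 2) (Fin L → Fin 2) ℂ) : Prop :=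
  ∃ (c : ℂ) (f : Fin L → Matrix (Fin 2) (Fin 2) ℂ),
    (c = 1 ∨ c = -1 ∨ c = Complex.I ∨ c = -Complex.I) ∧
    (∀ i, f i = P_I ∨ f i = P_X ∨ f i = P_Y ∨ f i = P_Z) ∧
    g = c • pauliKron f

/-- Tensor product of an operator on `H_A` and an operator on `H_B`. -/
def kron2 {a b : Type*} (M : Matrix a a ℂ) (N : Matrix b b ℂ) :
    Matrix (a × b) (a × b) ℂ :=
  Matrix.of fun p q => M p.1 q.1 * N p.2 q.2

/-- Partial transpose with respect to the `A` factor, in the fixed computational basis. -/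
def partialTransposeA {a b : Type*} (ρ : Matrix (a × b) (a × b) ℂ) :
    Matrix (a × b) (a × b) ℂ :=
  Matrix.of fun p q => ρ (q.1, p.2) (p.1, q.2)

/-- Trace norm `‖M‖₁ = Tr √(Mᴴ M)`, as the sum of singular values. -/
def traceNorm {n : Type*} [Fintype n] [DecidableEq n] (M : Matrix n n ℂ) : ℝ :=
  ∑ i, Real.sqrt ((Matrix.isHermitian_conjTranspose_mul_self M).eigenvalues i)

/-- Logarithmic entanglement negativity `E_N^{A|B}(ρ) = log₂ ‖ρ^{T_A}‖₁`. -/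
def logNegativity {a b : Type*} [Fintype a] [Fintype b] [DecidableEq a] [DecidableEq b]
    (ρ : Matrix (a × b) (a × b) ℂ) : ℝ :=
  Real.logb 2 (traceNorm (partialTransposeA ρ))

/-- Eigenvalues of a matrix (zero if the matrix is not Hermitian). -/
def eigs {n : Type*} [Fintype n] [DecidableEq n] (ρ : Matrix n n ℂ) : n → ℝ :=
  if h : ρ.IsHermitian then h.eigenvalues else fun _ => 0

/-- Von Neumann entropy in base 2, `S(ρ) = -Tr(ρ log₂ ρ)`. -/
def vnEntropy {n : Type*} [Fintype n] [DecidableEq n] (ρ : Matrix n n ℂ) : ℝ :=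
  -∑ i, (eigs ρ i) * Real.logb 2 (eigs ρ i)

/-- Rényi entropy of order `α` in base 2, with `S₀ = log₂ rank`. -/
def renyiEntropy {n : Type*} [Fintype n] [DecidableEq n] (α : ℝ) (ρ : Matrix n n ℂ) : ℝ :=
  if α = 0 then Real.logb 2 (ρ.rank)
  else (1 - α)⁻¹ * Real.logb 2 (∑ i, (eigs ρ i) ^ α)

/-- Partial trace over the `B` factor. -/
def ptraceB {a b : Type*} [Fintype b] (ρ : Matrix (a × b) (a × b) ℂ) : Matrix a a ℂ :=
  Matrix.of fun i i' => ∑ j, ρ (i, j) (i', j)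

/-- Partial trace over the `A` factor. -/
def ptraceA {a b : Type*} [Fintype a] (ρ : Matrix (a × b) (a × b) ℂ) : Matrix b b ℂ :=
  Matrix.of fun j j' => ∑ i, ρ (i, j) (i, j')

/-- The 𝔽₂ anticommutation matrix `J` of a family of operators:
`J i j = 1` iff the `i`-th and `j`-th operators fail to commute (for Pauli products,
this means they anticommute). -/
def anticommMatrix {n κ : Type*} [Fintype n] (hA : κ → Matrix n n ℂ) : Matrix κ κ (ZMod 2) :=
  Matrix.of fun i j => if Commute (hA i) (hA j) then 0 else 1

/-- Standard form: `ma` copies of the block `[[0,1],[1,0]]` along the diagonal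
(occupying the first `2*ma` indices), and zeros elsewhere. -/
def stdSymplectic (m ma : ℕ) : Matrix (Fin m) (Fin m) (ZMod 2) :=
  Matrix.of fun i j =>
    if i.val < 2 * ma ∧ j.val < 2 * ma ∧ i.val / 2 = j.val / 2 ∧ i.val ≠ j.val then 1 else 0

/-! For a pure state in Schmidt form `ψ = ∑ᵢ aᵢ |i i⟩` (with `aᵢ ≥ 0`), both reduced states are
`diag (aᵢ²)`, and the partial transpose of `|ψ⟩⟨ψ|` is a weighted swap whose square is
`diag (aᵢ² aⱼ²)`; hence `‖ρ^{T_A}‖₁ = (∑ᵢ aᵢ)²`, i.e. `E_N = S_{1/2}(ρ_A)`, while `I = 2 S(ρ_A)`.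
So everything reduces to comparing `S_{1/2}` and `S` on `diag (p, 1 - p)`. For `p = u⁴` the
binary entropy is `O(u³)` (the `p log p` term is `4u³ · u log u`), whereas
`log (√p + √(1 - p)) ≥ u² / 4`: the ratio blows up as `u → 0`. -/

namespace Matrix.IsHermitian

variable {n : Type*} [Fintype n] [DecidableEq n] {A : Matrix n n ℂ}

theorem map_eigenvalues_eq_of_eq_diagonal (hA : A.IsHermitian) {d : n → ℝ}
    (hd : A = diagonal fun i => (d i : ℂ)) :
    Finset.univ.val.map hA.eigenvalues = Finset.univ.val.map d := by
  have hroots : A.charpoly.roots = (Finset.univ.val.map d).map Complex.ofReal := by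
    rw [hd, charpoly_diagonal, Finset.prod_eq_multiset_prod, Multiset.map_map]
    simpa [Multiset.map_map] using
      Polynomial.roots_multiset_prod_X_sub_C (Finset.univ.val.map (Complex.ofReal ∘ d))
  rw [hA.roots_charpoly_eq_eigenvalues, ← Multiset.map_map] at hroots
  exact Multiset.map_injective Complex.ofReal_injective hroots

theorem sum_comp_eigenvalues_of_eq_diagonal (hA : A.IsHermitian) {d : n → ℝ}
    (hd : A = diagonal fun i => (d i : ℂ)) (g : ℝ → ℝ) :
    ∑ i, g (hA.eigenvalues i) = ∑ i, g (d i) := by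
  simpa [Multiset.map_map] using
    congrArg (fun s => (s.map g).sum) (hA.map_eigenvalues_eq_of_eq_diagonal hd)

theorem eigenvalues_mem_zero_one_of_isIdempotentElem (hA : A.IsHermitian)
    (hid : IsIdempotentElem A) (i : n) : hA.eigenvalues i ∈ ({0, 1} : Set ℝ) :=
  hid.spectrum_subset ℝ (hA.eigenvalues_mem_spectrum_real i)

end Matrix.IsHermitian

section Entropy

variable {n : Type*} [Fintype n] [DecidableEq n]

theorem sum_comp_eigs_diagonal (d : n → ℝ) (g : ℝ → ℝ) :
    ∑ i, g (eigs (diagonal fun i => (d i : ℂ)) i) = ∑ i, g (d i) := by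
  have hd : (diagonal fun i => (d i : ℂ)).IsHermitian :=
    isHermitian_diagonal_of_self_adjoint _ (by ext i; simp)
  rw [eigs, dif_pos hd]
  exact hd.sum_comp_eigenvalues_of_eq_diagonal rfl g

theorem vnEntropy_diagonal (d : n → ℝ) :
    vnEntropy (diagonal fun i => (d i : ℂ)) = -∑ i, d i * Real.logb 2 (d i) := by
  rw [vnEntropy, sum_comp_eigs_diagonal d fun x => x * Real.logb 2 x]

theorem renyiEntropy_diagonal {α : ℝ} (hα : α ≠ 0) (d : n → ℝ) :
    renyiEntropy α (diagonal fun i => (d i : ℂ)) =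
      (1 - α)⁻¹ * Real.logb 2 (∑ i, d i ^ α) := by
  rw [renyiEntropy, if_neg hα, sum_comp_eigs_diagonal d fun x => x ^ α]

theorem vnEntropy_eq_zero_of_isIdempotentElem {A : Matrix n n ℂ} (hA : A.IsHermitian)
    (hid : IsIdempotentElem A) : vnEntropy A = 0 := by
  rw [vnEntropy, eigs, dif_pos hA, neg_eq_zero]
  refine Finset.sum_eq_zero fun i _ => ?_
  obtain h | h : hA.eigenvalues i = 0 ∨ hA.eigenvalues i = 1 :=
    hA.eigenvalues_mem_zero_one_of_isIdempotentElem hid i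
  all_goals simp [h]

theorem traceNorm_eq_sum_sqrt_of_conjTranspose_mul_self_eq_diagonal {M : Matrix n n ℂ}
    {d : n → ℝ} (hM : Mᴴ * M = diagonal fun i => (d i : ℂ)) :
    traceNorm M = ∑ i, √(d i) :=
  (isHermitian_conjTranspose_mul_self M).sum_comp_eigenvalues_of_eq_diagonal hM _

theorem vnEntropy_vecMulVec_star_eq_zero {ψ : n → ℂ} (hψ : star ψ ⬝ᵥ ψ = 1) :
    vnEntropy (vecMulVec ψ (star ψ)) = 0 := by
  refine vnEntropy_eq_zero_of_isIdempotentElem (posSemidef_vecMulVec_self_star ψ).isHermitian ?_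
  rw [IsIdempotentElem, vecMulVec_mul_vecMulVec, hψ, one_smul]

end Entropy

section Schmidt

variable {n : Type*} [DecidableEq n]

def schmidtVector (a : n → ℝ) : n × n → ℂ :=
  fun p => if p.1 = p.2 then (a p.1 : ℂ) else 0

@[simp]
theorem star_schmidtVector (a : n → ℝ) : star (schmidtVector a) = schmidtVector a := by
  ext p
  simp [schmidtVector, apply_ite (starRingEnd ℂ)]

variable [Fintype n] (a : n → ℝ)

theorem dotProduct_schmidtVector :
    schmidtVector a ⬝ᵥ schmidtVector a = ((∑ i, a i ^ 2 : ℝ) : ℂ) := by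
  simp [dotProduct, schmidtVector, Fintype.sum_prod_type, sq]

theorem ptraceB_schmidt :
    ptraceB (vecMulVec (schmidtVector a) (star (schmidtVector a))) =
      diagonal fun i => ((a i ^ 2 : ℝ) : ℂ) := by
  ext i i'
  rcases eq_or_ne i i' with rfl | h <;>
    simp [ptraceB, vecMulVec_apply, schmidtVector, sq, *]

theorem ptraceA_schmidt :
    ptraceA (vecMulVec (schmidtVector a) (star (schmidtVector a))) =
      diagonal fun i => ((a i ^ 2 : ℝ) : ℂ) := by
  ext j j'
  rcases eq_or_ne j j' with rfl | h <;>
    simp [ptraceA, vecMulVec_apply, schmidtVector, sq, eq_comm, *]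

theorem conjTranspose_mul_self_partialTransposeA_schmidt :
    (partialTransposeA (vecMulVec (schmidtVector a) (star (schmidtVector a))))ᴴ *
        partialTransposeA (vecMulVec (schmidtVector a) (star (schmidtVector a))) =
      diagonal fun p : n × n => ((a p.1 ^ 2 * a p.2 ^ 2 : ℝ) : ℂ) := by
  ext ⟨i, j⟩ ⟨k, l⟩
  rcases eq_or_ne i k with rfl | hik <;> rcases eq_or_ne j l with rfl | hjl <;>
    simp [mul_apply, partialTransposeA, vecMulVec_apply, schmidtVector,
      Fintype.sum_prod_type, eq_comm, *]
  ring

variable {a}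

theorem renyiEntropy_half_diagonal_sq (ha : ∀ i, 0 ≤ a i) :
    renyiEntropy (1 / 2) (diagonal fun i => ((a i ^ 2 : ℝ) : ℂ)) =
      2 * Real.logb 2 (∑ i, a i) := by
  have hsqrt : ∀ i, (a i ^ 2) ^ (1 / 2 : ℝ) = a i := fun i => by
    rw [← Real.sqrt_eq_rpow, Real.sqrt_sq (ha i)]
  rw [renyiEntropy_diagonal (by norm_num)]
  simp only [hsqrt]
  norm_num

theorem logNegativity_schmidt (ha : ∀ i, 0 ≤ a i) :
    logNegativity (vecMulVec (schmidtVector a) (star (schmidtVector a))) =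
      2 * Real.logb 2 (∑ i, a i) := by
  have hsqrt : ∀ p : n × n, √(a p.1 ^ 2 * a p.2 ^ 2) = a p.1 * a p.2 := fun p => by
    rw [← mul_pow, Real.sqrt_sq (mul_nonneg (ha p.1) (ha p.2))]
  rw [logNegativity, traceNorm_eq_sum_sqrt_of_conjTranspose_mul_self_eq_diagonal
    (conjTranspose_mul_self_partialTransposeA_schmidt a)]
  simp only [hsqrt, Fintype.sum_prod_type, ← Finset.sum_mul_sum, ← sq, Real.logb_pow]
  norm_num

theorem logNegativity_schmidt_eq_renyiEntropy (ha : ∀ i, 0 ≤ a i) :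
    logNegativity (vecMulVec (schmidtVector a) (star (schmidtVector a))) =
      renyiEntropy (1 / 2) (ptraceB (vecMulVec (schmidtVector a) (star (schmidtVector a)))) := by
  rw [logNegativity_schmidt ha, ptraceB_schmidt, renyiEntropy_half_diagonal_sq ha]

end Schmidt

namespace Real

theorem negMulLog_pow_four_lt {u : ℝ} (h0 : 0 < u) (h1 : u ≤ 1) :
    negMulLog (u ^ 4) < 4 * u ^ 3 := by
  have hlog : |log u * u| < 1 := abs_log_mul_self_lt u h0 h1
  calc negMulLog (u ^ 4) = 4 * u ^ 3 * -(log u * u) := by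
        rw [negMulLog, log_pow]; push_cast; ring
    _ < 4 * u ^ 3 * 1 := by gcongr; exact (neg_le_abs _).trans_lt hlog
    _ = 4 * u ^ 3 := mul_one _

theorem binEntropy_pow_four_lt {u : ℝ} (h0 : 0 < u) (h1 : u ≤ 1) :
    binEntropy (u ^ 4) < 5 * u ^ 3 := by
  have hrest : negMulLog (1 - u ^ 4) ≤ u ^ 3 := by
    calc negMulLog (1 - u ^ 4) ≤ 1 - (1 - u ^ 4) :=
          negMulLog_le_one_sub_self (by nlinarith [pow_le_one₀ h0.le h1 (n := 4)])
      _ ≤ u ^ 3 := by nlinarith [pow_le_one₀ h0.le h1 (n := 3), pow_pos h0 3]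
  rw [binEntropy_eq_negMulLog_add_negMulLog_one_sub]
  linarith [negMulLog_pow_four_lt h0 h1]

theorem sq_div_four_le_log_sq_add_sqrt {u : ℝ} (h : u ^ 2 ≤ 1 / 2) :
    u ^ 2 / 4 ≤ log (u ^ 2 + √(1 - u ^ 4)) := by
  have hu2 : 0 ≤ u ^ 2 := sq_nonneg u
  have hu4 : u ^ 4 ≤ 1 / 4 := by nlinarith
  have hsqrt : 1 - u ^ 4 ≤ √(1 - u ^ 4) :=
    le_sqrt_of_sq_le (by nlinarith [pow_nonneg hu2 2])
  have hx : 0 < 1 + u ^ 2 / 2 := by positivity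
  calc u ^ 2 / 4 ≤ 1 - (1 + u ^ 2 / 2)⁻¹ := by
        rw [le_sub_iff_add_le, ← le_sub_iff_add_le', inv_le_iff_one_le_mul₀ hx]
        nlinarith
    _ ≤ log (1 + u ^ 2 / 2) := one_sub_inv_le_log_of_pos hx
    _ ≤ log (u ^ 2 + √(1 - u ^ 4)) := log_le_log hx (by nlinarith)

theorem exists_mul_binEntropy_lt (C : ℝ) :
    ∃ p, 0 < p ∧ p < 1 ∧ C * binEntropy p < 2 * log (√p + √(1 - p)) := by
  set u : ℝ := (10 * (|C| + 1))⁻¹ with hu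
  have h0 : 0 < u := by positivity
  have hCu : (|C| + 1) * u = 1 / 10 := by rw [hu]; field_simp
  have h1 : u ≤ 1 / 10 := by nlinarith [le_abs_self C, abs_nonneg C]
  have hp1 : u ^ 4 < 1 := pow_lt_one₀ h0.le (by linarith) (by norm_num)
  have hsqrt : √(u ^ 4) = u ^ 2 := by
    rw [show u ^ 4 = (u ^ 2) ^ 2 by ring, sqrt_sq (sq_nonneg u)]
  refine ⟨u ^ 4, by positivity, hp1, ?_⟩
  rw [hsqrt]
  have hlog := sq_div_four_le_log_sq_add_sqrt (u := u) (by nlinarith)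
  calc C * binEntropy (u ^ 4) ≤ (|C| + 1) * binEntropy (u ^ 4) :=
        mul_le_mul_of_nonneg_right (by linarith [le_abs_self C])
          (binEntropy_pos (by positivity) hp1).le
    _ < (|C| + 1) * (5 * u ^ 3) := by gcongr; exact binEntropy_pow_four_lt h0 (by linarith)
    _ = u ^ 2 / 2 := by linear_combination 5 * u ^ 2 * hCu
    _ ≤ 2 * log (u ^ 2 + √(1 - u ^ 4)) := by linarith

end Real

theorem exists_renyiEntropy_half_gt_mul_vnEntropy (C : ℝ) :
    ∃ a : Fin 2 → ℝ, (∀ i, 0 ≤ a i) ∧ ∑ i, a i ^ 2 = 1 ∧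
      0 < vnEntropy (diagonal fun i => ((a i ^ 2 : ℝ) : ℂ)) ∧
      C * vnEntropy (diagonal fun i => ((a i ^ 2 : ℝ) : ℂ)) <
        renyiEntropy (1 / 2) (diagonal fun i => ((a i ^ 2 : ℝ) : ℂ)) := by
  obtain ⟨p, hp0, hp1, hlt⟩ := Real.exists_mul_binEntropy_lt C
  set a : Fin 2 → ℝ := ![√p, √(1 - p)]
  have ha : ∀ i, 0 ≤ a i := fun i => by fin_cases i <;> exact Real.sqrt_nonneg _
  have ha0 : a 0 ^ 2 = p := Real.sq_sqrt hp0.le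
  have ha1 : a 1 ^ 2 = 1 - p := Real.sq_sqrt (by linarith)
  have hlog2 : 0 < Real.log 2 := Real.log_pos one_lt_two
  have hvn : vnEntropy (diagonal fun i => ((a i ^ 2 : ℝ) : ℂ)) =
      Real.binEntropy p / Real.log 2 := by
    rw [vnEntropy_diagonal, Fin.sum_univ_two, ha0, ha1,
      Real.binEntropy_eq_negMulLog_add_negMulLog_one_sub, Real.negMulLog, Real.negMulLog,
      Real.logb, Real.logb]
    ring
  have hrenyi : renyiEntropy (1 / 2) (diagonal fun i => ((a i ^ 2 : ℝ) : ℂ)) =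
      2 * Real.log (√p + √(1 - p)) / Real.log 2 := by
    rw [renyiEntropy_half_diagonal_sq ha, Fin.sum_univ_two, Real.logb, mul_div_assoc]
    rfl
  refine ⟨a, ha, by rw [Fin.sum_univ_two, ha0, ha1]; ring, ?_, ?_⟩
  · rw [hvn]; exact div_pos (Real.binEntropy_pos hp0 hp1) hlog2
  · rw [hvn, hrenyi, mul_div_assoc', div_lt_div_iff_of_pos_right hlog2]
    exact hlt

/-- The bound `2·E_N ≤ I` fails for general states: there is a two-qubit
pure state with `2·E_N^{A|B} > I_{A,B}`; more strongly, the ratio `S_{1/2}(ρ_A)/S(ρ_A)`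
is unbounded over single-qubit density matrices. -/
theorem stmt10 :
    (∃ (ψ : Fin 2 × Fin 2 → ℂ)
       (ρ : Matrix (Fin 2 × Fin 2) (Fin 2 × Fin 2) ℂ),
      ρ = Matrix.vecMulVec ψ (star ψ) ∧ ρ.trace = 1 ∧
      2 * logNegativity ρ >
        vnEntropy (ptraceB ρ) + vnEntropy (ptraceA ρ) - vnEntropy ρ) ∧
    (∀ C : ℝ, ∃ ρA : Matrix (Fin 2) (Fin 2) ℂ, ρA.PosSemidef ∧ ρA.trace = 1 ∧
      0 < vnEntropy ρA ∧ renyiEntropy (1 / 2) ρA > C * vnEntropy ρA) := by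
  constructor
  · obtain ⟨a, ha, hnorm, -, hlt⟩ := exists_renyiEntropy_half_gt_mul_vnEntropy 1
    have hunit : star (schmidtVector a) ⬝ᵥ schmidtVector a = 1 := by
      rw [star_schmidtVector, dotProduct_schmidtVector, hnorm, Complex.ofReal_one]
    refine ⟨schmidtVector a, _, rfl, ?_, ?_⟩
    · rw [trace_vecMulVec, dotProduct_comm, hunit]
    · rw [logNegativity_schmidt_eq_renyiEntropy ha, ptraceB_schmidt, ptraceA_schmidt,
        vnEntropy_vecMulVec_star_eq_zero hunit]
      linarith
  · intro C
    obtain ⟨a, -, hnorm, hpos, hlt⟩ := exists_renyiEntropy_half_gt_mul_vnEntropy C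
    refine ⟨_, PosSemidef.diagonal fun i => ?_, ?_, hpos, hlt⟩
    · exact Complex.zero_le_real.mpr (sq_nonneg (a i))
    · rw [trace_diagonal, ← Complex.ofReal_sum, hnorm, Complex.ofReal_one]
end
end

section
/- Let ρ = (1/2^L)(1 + a + b + ab) where a, b are commuting Hermitian Pauli-product operators on L qubits (a² = b² = 1) whose A-parts anticommute, so that ρ^{T_A} = (1/2^L)(1 + ã + b̃ − ãb̃) for operators ã = a^{T_A}, b̃ = b^{T_A} which are again Hermitian Pauli products with ã² = b̃² = 1 and [ã,b̃]=0. Then ‖ρ^{T_A}‖₁ = 2·Tr(ρ), i.e. the partial transpose of one anticommuting generator pair doubles the trace norm. -/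
/-! Write `x = aAᵀ ⊗ aB` and `y = bAᵀ ⊗ bB`. Because `aA` and `bA` anticommute, the partial
transpose flips the sign of the last term: `ρ^{T_A} = 2^{-L} (1 + x + y - x y)`. A tensor
product equal to `1` has scalar factors, so `aA²`, `bA²` are nonzero scalars and
`x² = y² = 1`; as `aA bA` is then invertible, the commutation of `a` and `b` forces `aB` and `bB`
to anticommute, so `x` and `y` commute. Hence `(1 + x + y - x y)² = 4`, all `2^L` singular
values of the Hermitian matrix `ρ^{T_A}` equal `2 / 2^L`, and `‖ρ^{T_A}‖₁ = 2`. Finally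
`Tr ρ = 1`: a matrix anticommuting with an invertible one is traceless. -/

open Matrix BigOperators
open scoped Classical ComplexOrder

noncomputable section

open scoped Kronecker

namespace Matrix

section Kronecker

variable {K : Type*} [Field K] {m n : Type*}

theorem neg_kronecker {α l m n p : Type*} [Mul α] [HasDistribNeg α] (A : Matrix l m α)
    (B : Matrix n p α) : (-A) ⊗ₖ B = -(A ⊗ₖ B) := by
  ext ⟨i, i'⟩ ⟨j, j'⟩
  simp [neg_mul]

theorem kronecker_neg {α l m n p : Type*} [Mul α] [HasDistribNeg α] (A : Matrix l m α)
    (B : Matrix n p α) : A ⊗ₖ (-B) = -(A ⊗ₖ B) := by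
  ext ⟨i, i'⟩ ⟨j, j'⟩
  simp [mul_neg]

theorem kronecker_right_injective {l m n p : Type*} {A : Matrix l m K} (hA : A ≠ 0) :
    Function.Injective (fun B : Matrix n p K => A ⊗ₖ B) := by
  intro B B' h
  obtain ⟨i, j, hij⟩ : ∃ i j, A i j ≠ 0 := by
    by_contra! hzero
    exact hA (Matrix.ext hzero)
  ext p q
  exact mul_left_cancel₀ hij (congr_fun (congr_fun h (i, p)) (j, q))

theorem exists_eq_smul_one_of_kronecker_eq_one [DecidableEq m] [DecidableEq n] [Nonempty m]
    [Nonempty n] {M : Matrix m m K} {N : Matrix n n K} (h : M ⊗ₖ N = 1) :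
    ∃ c : K, c ≠ 0 ∧ M = c • 1 ∧ N = c⁻¹ • 1 := by
  obtain ⟨i₀⟩ := ‹Nonempty m›
  obtain ⟨j₀⟩ := ‹Nonempty n›
  have hentry (i i' : m) (j j' : n) :
      M i i' * N j j' = (1 : Matrix m m K) i i' * (1 : Matrix n n K) j j' := by
    simpa using congr_fun (congr_fun (h.trans one_kronecker_one.symm) (i, j)) (i', j')
  have hc : M i₀ i₀ * N j₀ j₀ = 1 := by simpa using hentry i₀ i₀ j₀ j₀
  have hc₀ : M i₀ i₀ ≠ 0 := left_ne_zero_of_mul_eq_one hc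
  have hN₀ : N j₀ j₀ = (M i₀ i₀)⁻¹ := eq_inv_of_mul_eq_one_right hc
  refine ⟨M i₀ i₀, hc₀, ?_, ?_⟩
  · ext i i'
    have := hentry i i' j₀ j₀
    rw [hN₀, one_apply_eq, mul_one] at this
    rw [smul_apply, smul_eq_mul, ← this]
    field_simp
  · ext j j'
    have := hentry i₀ i₀ j j'
    rw [one_apply_eq, one_mul] at this
    rw [smul_apply, smul_eq_mul, ← this, inv_mul_cancel_left₀ hc₀]

theorem exists_mul_self_eq_smul_one_of_kronecker [Fintype m] [Fintype n] [DecidableEq m]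
    [DecidableEq n] [Nonempty m] [Nonempty n] {M : Matrix m m K} {N : Matrix n n K}
    (h : M ⊗ₖ N * M ⊗ₖ N = 1) : ∃ c : K, c ≠ 0 ∧ M * M = c • 1 := by
  obtain ⟨c, hc, hM, -⟩ :=
    exists_eq_smul_one_of_kronecker_eq_one ((mul_kronecker_mul ..).trans h)
  exact ⟨c, hc, hM⟩

theorem isUnit_of_mul_self_eq_smul_one [Fintype n] [DecidableEq n] {M : Matrix n n K} {c : K}
    (hc : c ≠ 0) (h : M * M = c • 1) : IsUnit M :=
  IsUnit.of_mul_eq_one (c⁻¹ • M) <| by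
    rw [mul_smul_comm, h, smul_smul, inv_mul_cancel₀ hc, one_smul]

theorem trace_mul_eq_zero_of_mul_eq_neg [Fintype n] [CharZero K] {x y : Matrix n n K}
    (h : x * y = -(y * x)) : (x * y).trace = 0 := by
  refine self_eq_neg.mp ?_
  calc (x * y).trace = (-(y * x)).trace := by rw [h]
    _ = -(x * y).trace := by rw [trace_neg, trace_mul_comm]

theorem trace_eq_zero_of_mul_eq_neg [Fintype n] [DecidableEq n] [CharZero K] {x y : Matrix n n K}
    {c : K} (hc : c ≠ 0) (hy : y * y = c • 1) (h : x * y = -(y * x)) : x.trace = 0 := by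
  have hyx : y * x = -(x * y) := by rw [h, neg_neg]
  have hxyy : (x * y) * y = -(y * (x * y)) := by rw [← mul_assoc y x y, hyx, neg_mul, neg_neg]
  have hcx : c * x.trace = 0 := by
    rw [← smul_eq_mul, ← trace_smul, ← mul_one x, ← mul_smul_comm, ← hy, ← mul_assoc]
    exact trace_mul_eq_zero_of_mul_eq_neg hxyy
  exact (mul_eq_zero.mp hcx).resolve_left hc

theorem transpose_kronecker_mul_self_eq_one [Fintype m] [Fintype n] [DecidableEq m]
    [DecidableEq n] [Nonempty m] [Nonempty n] {M : Matrix m m K} {N : Matrix n n K}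
    (h : M ⊗ₖ N * M ⊗ₖ N = 1) : Mᵀ ⊗ₖ N * Mᵀ ⊗ₖ N = 1 := by
  rw [← mul_kronecker_mul] at h ⊢
  obtain ⟨c, hc, hM, hN⟩ := exists_eq_smul_one_of_kronecker_eq_one h
  rw [← transpose_mul, hM, hN, transpose_smul, transpose_one, smul_kronecker, kronecker_smul,
    one_kronecker_one, smul_smul, mul_inv_cancel₀ hc, one_smul]

theorem commute_kronecker_of_mul_eq_neg [Fintype m] [Fintype n] {M M' : Matrix m m K}
    {N N' : Matrix n n K} (hM : M * M' = -(M' * M)) (hN : N * N' = -(N' * N)) :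
    Commute (M ⊗ₖ N) (M' ⊗ₖ N') := by
  rw [Commute, SemiconjBy, ← mul_kronecker_mul, ← mul_kronecker_mul, hM, hN, neg_kronecker,
    kronecker_neg, neg_neg]

theorem mul_eq_neg_mul_of_commute_kronecker [Fintype m] [Fintype n] {M M' : Matrix m m K}
    {N N' : Matrix n n K} (hcomm : Commute (M ⊗ₖ N) (M' ⊗ₖ N')) (hM : M * M' = -(M' * M))
    (hne : M * M' ≠ 0) :
    N * N' = -(N' * N) := by
  apply kronecker_right_injective hne
  beta_reduce
  rw [mul_kronecker_mul, hcomm.eq, ← mul_kronecker_mul, kronecker_neg, ← neg_kronecker, hM,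
    neg_neg]

end Kronecker

end Matrix

section PartialTranspose

theorem kron2_eq_kronecker {m n : Type*} (M : Matrix m m ℂ) (N : Matrix n n ℂ) :
    kron2 M N = M ⊗ₖ N := rfl

variable {m n : Type*}

theorem partialTransposeA_kronecker (M : Matrix m m ℂ) (N : Matrix n n ℂ) :
    partialTransposeA (M ⊗ₖ N) = Mᵀ ⊗ₖ N := rfl

theorem partialTransposeA_add (ρ σ : Matrix (m × n) (m × n) ℂ) :
    partialTransposeA (ρ + σ) = partialTransposeA ρ + partialTransposeA σ := rfl

theorem partialTransposeA_smul (c : ℂ) (ρ : Matrix (m × n) (m × n) ℂ) :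
    partialTransposeA (c • ρ) = c • partialTransposeA ρ := rfl

theorem partialTransposeA_one [DecidableEq m] [DecidableEq n] :
    partialTransposeA (1 : Matrix (m × n) (m × n) ℂ) = 1 := by
  rw [← Matrix.one_kronecker_one, partialTransposeA_kronecker, Matrix.transpose_one]

theorem Matrix.IsHermitian.partialTransposeA {ρ : Matrix (m × n) (m × n) ℂ}
    (h : ρ.IsHermitian) : (partialTransposeA ρ).IsHermitian := by
  ext p q
  exact congr_fun (congr_fun h (q.1, p.2)) (p.1, q.2)

theorem partialTransposeA_kronecker_mul_kronecker [Fintype m] [Fintype n] {M M' : Matrix m m ℂ}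
    (N N' : Matrix n n ℂ) (h : M * M' = -(M' * M)) :
    partialTransposeA (M ⊗ₖ N * M' ⊗ₖ N') = -(Mᵀ ⊗ₖ N * M'ᵀ ⊗ₖ N') := by
  rw [← Matrix.mul_kronecker_mul, ← Matrix.mul_kronecker_mul, partialTransposeA_kronecker, h,
    Matrix.transpose_neg, Matrix.transpose_mul, Matrix.neg_kronecker]

end PartialTranspose

section TraceNorm

variable {n : Type*} [Fintype n] [DecidableEq n]

theorem Matrix.IsHermitian.eigenvalues_eq_of_eq_smul_one {𝕜 : Type*} [RCLike 𝕜]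
    {A : Matrix n n 𝕜} (hA : A.IsHermitian) {r : ℝ} (h : A = (r : 𝕜) • 1) (i : n) :
    hA.eigenvalues i = r := by
  have : Nonempty n := ⟨i⟩
  have hspec : spectrum ℝ A = {r} := by
    rw [h, ← RCLike.real_smul_eq_coe_smul, ← Algebra.algebraMap_eq_smul_one, spectrum.scalar_eq]
  have hmem : hA.eigenvalues i ∈ spectrum ℝ A := by
    rw [hA.spectrum_real_eq_range_eigenvalues]
    exact ⟨i, rfl⟩
  rwa [hspec] at hmem

theorem traceNorm_eq_of_conjTranspose_mul_self_eq {M : Matrix n n ℂ} {r : ℝ} (hr : 0 ≤ r)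
    (h : Mᴴ * M = ((r ^ 2 : ℝ) : ℂ) • 1) : traceNorm M = Fintype.card n * r := by
  simp only [traceNorm,
    (Matrix.isHermitian_conjTranspose_mul_self M).eigenvalues_eq_of_eq_smul_one (r := r ^ 2) h,
    Real.sqrt_sq hr, Finset.sum_const, Finset.card_univ, nsmul_eq_mul]

theorem Commute.one_add_add_sub_mul_mul_self {R : Type*} [Ring R] {x y : R} (hxy : Commute x y)
    (hx : x * x = 1) (hy : y * y = 1) : (1 + x + y - x * y) * (1 + x + y - x * y) = 4 := by
  have hyx : y * x = x * y := hxy.eq.symm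
  have hxxy : x * (x * y) = y := by rw [← mul_assoc, hx, one_mul]
  have hyxy : y * (x * y) = x := by rw [← mul_assoc, hyx, mul_assoc, hy, mul_one]
  have hxyxy : x * y * (x * y) = 1 := by rw [mul_assoc, hyxy, hx]
  simp only [mul_add, add_mul, mul_sub, sub_mul, mul_one, one_mul, hx, hy, hyx, hxxy, hyxy, hxyxy,
    mul_assoc]
  noncomm_ring
  norm_num

theorem traceNorm_smul_one_add_add_sub_mul {x y : Matrix n n ℂ} (hxH : xᴴ = x) (hyH : yᴴ = y)
    (hx : x * x = 1) (hy : y * y = 1) (hxy : Commute x y) (s : ℝ) :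
    traceNorm ((s : ℂ) • (1 + x + y - x * y)) = Fintype.card n * (2 * |s|) := by
  have hH : ((s : ℂ) • (1 + x + y - x * y))ᴴ = (s : ℂ) • (1 + x + y - x * y) := by
    rw [Matrix.conjTranspose_smul, Matrix.conjTranspose_sub, Matrix.conjTranspose_add,
      Matrix.conjTranspose_add, Matrix.conjTranspose_one, Matrix.conjTranspose_mul, hxH, hyH,
      hxy.eq, Complex.star_def, Complex.conj_ofReal]
  refine traceNorm_eq_of_conjTranspose_mul_self_eq (by positivity) ?_
  rw [hH, smul_mul_smul_comm, hxy.one_add_add_sub_mul_mul_self hx hy,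
    ← map_ofNat (algebraMap ℂ (Matrix n n ℂ)), Algebra.algebraMap_eq_smul_one, smul_smul]
  congr 1
  push_cast
  rw [mul_pow, ← Complex.ofReal_pow, sq_abs]
  push_cast
  ring

end TraceNorm

section Generators

variable {m n : Type*} [Fintype m] [Fintype n] [DecidableEq m] [DecidableEq n]
  {aA bA : Matrix m m ℂ} {aB bB : Matrix n n ℂ}

theorem partialTransposeA_one_add_add_add_mul (hanti : aA * bA = -(bA * aA)) :
    partialTransposeA (1 + aA ⊗ₖ aB + bA ⊗ₖ bB + aA ⊗ₖ aB * bA ⊗ₖ bB) =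
      1 + aAᵀ ⊗ₖ aB + bAᵀ ⊗ₖ bB - aAᵀ ⊗ₖ aB * bAᵀ ⊗ₖ bB := by
  rw [partialTransposeA_add, partialTransposeA_add, partialTransposeA_add, partialTransposeA_one,
    partialTransposeA_kronecker, partialTransposeA_kronecker,
    partialTransposeA_kronecker_mul_kronecker _ _ hanti, ← sub_eq_add_neg]

theorem trace_one_add_add_add_mul [Nonempty m] [Nonempty n] (hsa : aA ⊗ₖ aB * aA ⊗ₖ aB = 1)
    (hsb : bA ⊗ₖ bB * bA ⊗ₖ bB = 1) (hanti : aA * bA = -(bA * aA)) :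
    (1 + aA ⊗ₖ aB + bA ⊗ₖ bB + aA ⊗ₖ aB * bA ⊗ₖ bB).trace =
      Fintype.card (m × n) := by
  obtain ⟨cA, hcA, haA⟩ := Matrix.exists_mul_self_eq_smul_one_of_kronecker hsa
  obtain ⟨cB, hcB, hbA⟩ := Matrix.exists_mul_self_eq_smul_one_of_kronecker hsb
  have hanti' : bA * aA = -(aA * bA) := by rw [hanti, neg_neg]
  rw [← Matrix.mul_kronecker_mul, Matrix.trace_add, Matrix.trace_add, Matrix.trace_add,
    Matrix.trace_one, Matrix.trace_kronecker, Matrix.trace_kronecker, Matrix.trace_kronecker,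
    Matrix.trace_eq_zero_of_mul_eq_neg hcB hbA hanti,
    Matrix.trace_eq_zero_of_mul_eq_neg hcA haA hanti',
    Matrix.trace_mul_eq_zero_of_mul_eq_neg hanti]
  simp

theorem traceNorm_partialTransposeA_smul_one_add_add_add_mul [Nonempty m] [Nonempty n]
    (ha : (aA ⊗ₖ aB)ᴴ = aA ⊗ₖ aB) (hb : (bA ⊗ₖ bB)ᴴ = bA ⊗ₖ bB)
    (hsa : aA ⊗ₖ aB * aA ⊗ₖ aB = 1) (hsb : bA ⊗ₖ bB * bA ⊗ₖ bB = 1)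
    (hcomm : Commute (aA ⊗ₖ aB) (bA ⊗ₖ bB)) (hanti : aA * bA = -(bA * aA)) (s : ℝ) :
    traceNorm (partialTransposeA
        ((s : ℂ) • (1 + aA ⊗ₖ aB + bA ⊗ₖ bB + aA ⊗ₖ aB * bA ⊗ₖ bB))) =
      Fintype.card (m × n) * (2 * |s|) := by
  obtain ⟨cA, hcA, haA⟩ := Matrix.exists_mul_self_eq_smul_one_of_kronecker hsa
  obtain ⟨cB, hcB, hbA⟩ := Matrix.exists_mul_self_eq_smul_one_of_kronecker hsb
  have hantiB : aB * bB = -(bB * aB) :=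
    Matrix.mul_eq_neg_mul_of_commute_kronecker hcomm hanti
      ((Matrix.isUnit_of_mul_self_eq_smul_one hcA haA).mul
        (Matrix.isUnit_of_mul_self_eq_smul_one hcB hbA)).ne_zero
  have hantiT : aAᵀ * bAᵀ = -(bAᵀ * aAᵀ) := by
    rw [← Matrix.transpose_mul, ← Matrix.transpose_mul, hanti, Matrix.transpose_neg, neg_neg]
  have hxH : (aAᵀ ⊗ₖ aB).IsHermitian := by
    rw [← partialTransposeA_kronecker]
    exact Matrix.IsHermitian.partialTransposeA ha
  have hyH : (bAᵀ ⊗ₖ bB).IsHermitian := by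
    rw [← partialTransposeA_kronecker]
    exact Matrix.IsHermitian.partialTransposeA hb
  rw [partialTransposeA_smul, partialTransposeA_one_add_add_add_mul hanti]
  exact traceNorm_smul_one_add_add_sub_mul hxH hyH
    (Matrix.transpose_kronecker_mul_self_eq_one hsa)
    (Matrix.transpose_kronecker_mul_self_eq_one hsb)
    (Matrix.commute_kronecker_of_mul_eq_neg hantiT hantiB) s

end Generators

theorem stmt16_general (LA LB : ℕ)
    (aA bA : Matrix (Fin LA → Fin 2) (Fin LA → Fin 2) ℂ)
    (aB bB : Matrix (Fin LB → Fin 2) (Fin LB → Fin 2) ℂ)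
    (ha : (kron2 aA aB)ᴴ = kron2 aA aB) (hb : (kron2 bA bB)ᴴ = kron2 bA bB)
    (hsa : kron2 aA aB * kron2 aA aB = 1) (hsb : kron2 bA bB * kron2 bA bB = 1)
    (hcomm : Commute (kron2 aA aB) (kron2 bA bB))
    (hanti : aA * bA = -(bA * aA))
    (ρ : Matrix ((Fin LA → Fin 2) × (Fin LB → Fin 2))
      ((Fin LA → Fin 2) × (Fin LB → Fin 2)) ℂ)
    (hρ : ρ = ((2 : ℂ) ^ (LA + LB))⁻¹ •
      (1 + kron2 aA aB + kron2 bA bB + kron2 aA aB * kron2 bA bB)) :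
    traceNorm (partialTransposeA ρ) = 2 * ρ.trace.re := by
  simp only [kron2_eq_kronecker] at ha hb hsa hsb hcomm hρ
  have hcard : Fintype.card ((Fin LA → Fin 2) × (Fin LB → Fin 2)) = 2 ^ (LA + LB) := by
    simp [pow_add]
  have hscalar : ((2 : ℂ) ^ (LA + LB))⁻¹ = ((((2 : ℝ) ^ (LA + LB))⁻¹ : ℝ) : ℂ) := by
    rw [Complex.ofReal_inv, Complex.ofReal_pow, Complex.ofReal_ofNat]
  rw [hρ, hscalar, traceNorm_partialTransposeA_smul_one_add_add_add_mul ha hb hsa hsb hcomm hanti,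
    Matrix.trace_smul, trace_one_add_add_add_mul hsa hsb hanti, hcard,
    abs_of_pos (by positivity), smul_eq_mul, ← Complex.ofReal_natCast, ← Complex.ofReal_mul,
    Complex.ofReal_re]
  push_cast
  field_simp

/-- For `ρ = (1/2^L)(1 + a + b + ab)` with `a,b` commuting Hermitian Pauli
products squaring to `1` whose A-parts anticommute, the partial transpose doubles the
trace norm: `‖ρ^{T_A}‖₁ = 2·Tr ρ`. -/
theorem stmt16 (LA LB : ℕ)
    (aA bA : Matrix (Fin LA → Fin 2) (Fin LA → Fin 2) ℂ)
    (aB bB : Matrix (Fin LB → Fin 2) (Fin LB → Fin 2) ℂ)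
    (hpaA : IsPauliProduct aA) (hpbA : IsPauliProduct bA)
    (hpaB : IsPauliProduct aB) (hpbB : IsPauliProduct bB)
    (ha : (kron2 aA aB)ᴴ = kron2 aA aB) (hb : (kron2 bA bB)ᴴ = kron2 bA bB)
    (hsa : kron2 aA aB * kron2 aA aB = 1) (hsb : kron2 bA bB * kron2 bA bB = 1)
    (hcomm : Commute (kron2 aA aB) (kron2 bA bB))
    (hanti : aA * bA = -(bA * aA))
    (ρ : Matrix ((Fin LA → Fin 2) × (Fin LB → Fin 2))
      ((Fin LA → Fin 2) × (Fin LB → Fin 2)) ℂ)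
    (hρ : ρ = ((2 : ℂ) ^ (LA + LB))⁻¹ •
      (1 + kron2 aA aB + kron2 bA bB + kron2 aA aB * kron2 bA bB)) :
    traceNorm (partialTransposeA ρ) = 2 * ρ.trace.re :=
  stmt16_general LA LB aA bA aB bB ha hb hsa hsb hcomm hanti ρ hρ
end
end
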